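/- arXiv:2006.03045 — 4 statements merged into one kernel-verified Lean document; each statement's English description precedes it below -/
import Mathlib

section
/- Define z_i = min over j ∈ {i−b+1,...,i} of ( Σ_{l=j+b}^{i+τ−1} |P[l]| − Σ_{l=j}^{i−1} k_l ), and set |V[i]| = min(k_i, z_i), |U[i]| = k_i − |V[i]|, |P[i+τ]| = |U[i]|. If |P[i]| > 0 for some i ≥ τ + b, then there exists j ∈ {i−τ−b+1, ..., i−τ} such that Σ_{l=j}^{i−τ} k_l = Σ_{l=j+b}^{i} |P[l]|. -/
/-- Size of the parity block `P[i]` of the `(τ,b)`-Variable-sized Generalized MS Code: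
`|P[i]| = 0` for `i < τ`, `|P[i]| = k_{i−τ}` for `τ ≤ i < τ+b`, and
`|P[i+τ]| = |U[i]| = k_i − min(k_i, z_i)` where
`z_i = min_{j ∈ {i−b+1,…,i}} (Σ_{l=j+b}^{i+τ−1} |P[l]| − Σ_{l=j}^{i−1} k_l)`. -/
noncomputable def Psize (τ b : ℕ) (k : ℕ → ℤ) : ℕ → ℤ
  | i =>
    if i < τ then 0
    else if i < τ + b then k (i - τ)
    else
      k (i - τ) - min (k (i - τ))
        (sInf ((fun j : ℕ =>
          (∑ l ∈ (Finset.Ico (j + b) i).attach, Psize τ b k l.1) -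
            ∑ l ∈ Finset.Icc j (i - τ - 1), k l) '' Set.Icc (i - τ - b + 1) (i - τ)))
  termination_by i => i
  decreasing_by exact (Finset.mem_Ico.mp l.2).2

/-!
Positive parity at time `i` means that the minimum `z_{i−τ}` in the recursion is below
`k_{i−τ}`, so `|P[i]| = k_{i−τ} − z_{i−τ}`. A burst start `j` attaining that minimum then
balances exactly: adding `|P[i]|` to its parity and `k_{i−τ}` to its messages cancels the slack.
-/

open Finset

/-- The quantity minimised in `z_{i−τ}`, for the burst start `j`. -/
noncomputable def burstSlack (τ b : ℕ) (k : ℕ → ℤ) (i j : ℕ) : ℤ :=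
  ∑ l ∈ Ico (j + b) i, Psize τ b k l - ∑ l ∈ Ico j (i - τ), k l

theorem Psize_eq_of_add_le {τ b : ℕ} (k : ℕ → ℤ) {i : ℕ} (hb : 1 ≤ b) (hi : τ + b ≤ i) :
    Psize τ b k i = k (i - τ) -
      min (k (i - τ)) (sInf (burstSlack τ b k i '' Set.Icc (i - τ - b + 1) (i - τ))) := by
  rw [Psize, if_neg (by omega), if_neg (by omega)]
  simp only [sum_attach]
  have hIcc (j : ℕ) : Icc j (i - τ - 1) = Ico j (i - τ) := by
    ext; simp only [mem_Icc, mem_Ico]; omega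
  simp only [hIcc]
  rfl

theorem exists_Psize_eq_sub_burstSlack {τ b : ℕ} (k : ℕ → ℤ) {i : ℕ} (hb : 1 ≤ b)
    (hi : τ + b ≤ i) (hP : 0 < Psize τ b k i) :
    ∃ j ∈ Icc (i - τ - b + 1) (i - τ), Psize τ b k i = k (i - τ) - burstSlack τ b k i j := by
  set z := sInf (burstSlack τ b k i '' Set.Icc (i - τ - b + 1) (i - τ))
  have hz_mem : z ∈ burstSlack τ b k i '' Set.Icc (i - τ - b + 1) (i - τ) :=
    ((Set.nonempty_Icc.mpr (by omega)).image _).csInf_mem ((Set.finite_Icc _ _).image _)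
  obtain ⟨j, hj, hjz⟩ := hz_mem
  rw [Psize_eq_of_add_le k hb hi] at hP ⊢
  have hzk : z < k (i - τ) := by simpa using hP
  exact ⟨j, mem_Icc.mpr hj, by rw [min_eq_right hzk.le, hjz]⟩

theorem stmt10_general (τ b : ℕ) (k : ℕ → ℤ) (hb : 1 ≤ b) (hbτ : b ≤ τ)
    (i : ℕ) (hi : τ + b ≤ i) (hP : 0 < Psize τ b k i) :
    ∃ j ∈ Finset.Icc (i - τ - b + 1) (i - τ),
      ∑ l ∈ Finset.Icc j (i - τ), k l = ∑ l ∈ Finset.Icc (j + b) i, Psize τ b k l := by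
  obtain ⟨j, hj, hPj⟩ := exists_Psize_eq_sub_burstSlack k hb hi hP
  have hj' := mem_Icc.mp hj
  refine ⟨j, hj, ?_⟩
  rw [← Ico_add_one_right_eq_Icc, sum_Ico_succ_top hj'.2, ← Ico_add_one_right_eq_Icc,
    sum_Ico_succ_top (by omega : j + b ≤ i), hPj, burstSlack]
  ring

/-- Lemma exactRec: if the `(τ,b)`-Variable-sized Generalized MS Code
sends parity at time `i ≥ τ + b` (i.e. `|P[i]| > 0`), then there is a burst start
`j ∈ {i−τ−b+1, …, i−τ}` with `Σ_{l=j}^{i−τ} k_l = Σ_{l=j+b}^{i} |P[l]|`. -/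
theorem stmt10 (τ b : ℕ) (k : ℕ → ℤ) (hb : 1 ≤ b) (hbτ : b ≤ τ)
    (hk : ∀ l, 0 ≤ k l) (i : ℕ) (hi : τ + b ≤ i) (hP : 0 < Psize τ b k i) :
    ∃ j ∈ Finset.Icc (i - τ - b + 1) (i - τ),
      ∑ l ∈ Finset.Icc j (i - τ), k l = ∑ l ∈ Finset.Icc (j + b) i, Psize τ b k l :=
  stmt10_general τ b k hb hbτ i hi hP
end

section
/- With the recursive definitions of |P[·]|, |U[·]|, |V[·]| as in the Variable-sized Generalized MS Code, for every i and every burst start j ∈ {i−b+1, ..., i}, the total parity available after the burst satisfies Σ_{l=j+b}^{i+τ} |P[l]| ≥ Σ_{l=j}^{i} k_l; i.e., the parity symbols sent in time slots j+b through i+τ suffice in number to cover all messages k_j, ..., k_i erased by a burst covering slots j through j+b−1. -/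
lemma Psize_low (τ b : ℕ) (k : ℕ → ℤ) (i : ℕ) (h : i < τ) : Psize τ b k i = 0 := by
  rw [Psize]; simp [h]

lemma Psize_mid (τ b : ℕ) (k : ℕ → ℤ) (i : ℕ) (h1 : τ ≤ i) (h2 : i < τ + b) :
    Psize τ b k i = k (i - τ) := by
  rw [Psize]; simp [Nat.not_lt.mpr h1, h2]

lemma Psize_high (τ b : ℕ) (k : ℕ → ℤ) (i : ℕ) (h : τ + b ≤ i) :
    Psize τ b k i = k (i - τ) - min (k (i - τ))
        (sInf ((fun j : ℕ =>
          (∑ l ∈ Finset.Ico (j + b) i, Psize τ b k l) -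
            ∑ l ∈ Finset.Icc j (i - τ - 1), k l) '' Set.Icc (i - τ - b + 1) (i - τ))) := by
  rw [Psize]
  have h1 : ¬ i < τ := by omega
  have h2 : ¬ i < τ + b := by omega
  simp only [h1, h2, if_false]
  have : (fun j : ℕ =>
          (∑ l ∈ (Finset.Ico (j + b) i).attach, Psize τ b k l.1) -
            ∑ l ∈ Finset.Icc j (i - τ - 1), k l) = (fun j : ℕ =>
          (∑ l ∈ Finset.Ico (j + b) i, Psize τ b k l) -
            ∑ l ∈ Finset.Icc j (i - τ - 1), k l) := by
    funext j
    rw [Finset.sum_attach]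
  rw [this]

/-- for every time `i` and every burst start `j ∈ {i−b+1,…,i}`, the
parity sent in slots `j+b` through `i+τ` suffices in number to cover all the
messages `k_j, …, k_i` erased by a burst covering slots `j` through `j+b−1`:
`Σ_{l=j+b}^{i+τ} |P[l]| ≥ Σ_{l=j}^{i} k_l`. -/
theorem stmt11 (τ b : ℕ) (k : ℕ → ℤ) (hb : 1 ≤ b) (hbτ : b ≤ τ) (hk : ∀ l, 0 ≤ k l)
    (i j : ℕ) (hj : j ∈ Finset.Icc (i - b + 1) i) :
    ∑ l ∈ Finset.Icc j i, k l ≤ ∑ l ∈ Finset.Icc (j + b) (i + τ), Psize τ b k l := by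
  rw [Finset.mem_Icc] at hj
  by_cases hib : i < b
  · -- small case: every relevant parity equals a message size
    have key : ∑ l ∈ Finset.Icc j i, k l = ∑ l ∈ Finset.Icc (j + τ) (i + τ), Psize τ b k l := by
      rw [← Finset.map_add_right_Icc, Finset.sum_map]
      apply Finset.sum_congr rfl
      intro l hl
      rw [Finset.mem_Icc] at hl
      simp only [addRightEmbedding_apply]
      rw [Psize_mid τ b k (l + τ) (by omega) (by omega)]
      congr 1
      omega
    rw [key]
    apply Finset.sum_le_sum_of_subset_of_nonneg
    · apply Finset.Icc_subset_Icc_left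
      omega
    · intro l hl _
      rw [Finset.mem_Icc] at hl
      by_cases hlτ : l < τ
      · rw [Psize_low τ b k l hlτ]
      · rw [Psize_mid τ b k l (by omega) (by omega)]
        exact hk _
  · -- main case: use the defining min at index i + τ
    have hm : τ + b ≤ i + τ := by omega
    have hdef := Psize_high τ b k (i + τ) hm
    have e1 : i + τ - τ = i := by omega
    have e2 : i + τ - τ - b + 1 = i - b + 1 := by omega
    have e3 : i + τ - τ - 1 = i - 1 := by omega
    rw [e1] at hdef
    set f : ℕ → ℤ := fun j =>
      (∑ l ∈ Finset.Ico (j + b) (i + τ), Psize τ b k l) -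
        ∑ l ∈ Finset.Icc j (i - 1), k l with hf
    have hmem : f j ∈ f '' Set.Icc (i - b + 1) i :=
      Set.mem_image_of_mem f (by exact Set.mem_Icc.mpr hj)
    have hbdd : BddBelow (f '' Set.Icc (i - b + 1) i) :=
      ((Set.finite_Icc _ _).image f).bddBelow
    have hInf : sInf (f '' Set.Icc (i - b + 1) i) ≤ f j := csInf_le hbdd hmem
    have hmin : min (k i) (sInf (f '' Set.Icc (i - b + 1) i)) ≤ f j :=
      le_trans (min_le_right _ _) hInf
    have hP : k i - f j ≤ Psize τ b k (i + τ) := by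
      rw [hdef]; linarith
    -- split both sums at the top
    have hsplitP : ∑ l ∈ Finset.Icc (j + b) (i + τ), Psize τ b k l =
        (∑ l ∈ Finset.Ico (j + b) (i + τ), Psize τ b k l) + Psize τ b k (i + τ) := by
      rw [← Finset.Ico_add_one_right_eq_Icc, Finset.sum_Ico_succ_top (by omega)]
    have hsplitk : ∑ l ∈ Finset.Icc j i, k l =
        (∑ l ∈ Finset.Icc j (i - 1), k l) + k i := by
      have : Finset.Icc j (i - 1) = Finset.Ico j i := by
        rw [← Finset.Ico_add_one_right_eq_Icc]
        congr 1
        omega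
      rw [this, ← Finset.Ico_add_one_right_eq_Icc, Finset.sum_Ico_succ_top (by omega)]
    rw [hsplitP, hsplitk]
    have := hP
    rw [hf] at this
    simp only at this
    linarith
end

section
/- Consider the same recursive size definitions. For the burst X[i],...,X[i+b−1], the parity symbols strictly before time i+τ satisfy Σ_{j=i+b}^{i+τ−1} |P'[j]| ≥ Σ_{j=i}^{i+b−1} |V[j]|, where |P'[j]| = |P[j]| for j < i+τ. Equivalently, subtracting |P'[j]| = |U[j−τ]| for j ∈ {i+τ,...,i+τ+b−1} from the inequality Σ_{j=i+b}^{i+τ+b−1} |P'[j]| ≥ Σ_{j=i}^{i+b−1} k_j yields the claim. -/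
/-- `z_i = min_{j ∈ {i−b+1,…,i}} (Σ_{l=j+b}^{i+τ−1} |P[l]| − Σ_{l=j}^{i−1} k_l)`. -/
noncomputable def zfun (τ b : ℕ) (k : ℕ → ℤ) (i : ℕ) : ℤ :=
  sInf ((fun j : ℕ =>
    (∑ l ∈ Finset.Ico (j + b) (i + τ), Psize τ b k l) -
      ∑ l ∈ Finset.Icc j (i - 1), k l) '' Set.Icc (i - b + 1) i)

/-- `|V[i]| = 0` for `i < b` and `|V[i]| = min(k_i, z_i)` for `i ≥ b`. -/
noncomputable def Vsize (τ b : ℕ) (k : ℕ → ℤ) (i : ℕ) : ℤ :=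
  if i < b then 0 else min (k i) (zfun τ b k i)

/-- `|U[i]| = k_i − |V[i]|`. -/
noncomputable def Usize (τ b : ℕ) (k : ℕ → ℤ) (i : ℕ) : ℤ :=
  k i - Vsize τ b k i

/-!
For `τ ≤ l`, unfolding the recursion gives `|P[l]| = k_{l-τ} - |V[l-τ]| = |U[l-τ]|`. Take the last
symbol `m = i+b-1` of the burst and the burst start `j = i` in the minimum defining `z_m`:
`|V[m]| ≤ Σ_{l=i+b}^{i+τ+b-2} |P[l]| - Σ_{l=i}^{i+b-2} k_l`. The parities at times
`i+τ, …, i+τ+b-2` are exactly `|U[i]|, …, |U[i+b-2]|`; moving them to the other side turns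
`k_l - |U[l]|` into `|V[l]|` and leaves the claim. When `i = 0` both sides vanish.
-/

section

variable {τ b : ℕ} {k : ℕ → ℤ}

lemma Psize_of_lt {l : ℕ} (hl : l < τ) : Psize τ b k l = 0 := by
  rw [Psize, if_pos hl]

lemma Vsize_of_lt {l : ℕ} (hl : l < b) : Vsize τ b k l = 0 := by
  rw [Vsize, if_pos hl]

lemma Psize_add_eq_Usize (j : ℕ) : Psize τ b k (j + τ) = Usize τ b k j := by
  rw [Psize, if_neg (by omega), Usize, Nat.add_sub_cancel]
  split_ifs with hj
  · rw [Vsize_of_lt (by omega), sub_zero]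
  · rw [Vsize, if_neg (by omega), zfun]
    simp only [Finset.sum_attach (Finset.Ico _ (j + τ)) (fun l => Psize τ b k l)]

lemma Vsize_le_of_mem_Icc {m j : ℕ} (hm : b ≤ m) (hj : j ∈ Set.Icc (m - b + 1) m) :
    Vsize τ b k m ≤
      (∑ l ∈ Finset.Ico (j + b) (m + τ), Psize τ b k l) - ∑ l ∈ Finset.Icc j (m - 1), k l := by
  rw [Vsize, if_neg (by omega)]
  refine (min_le_right _ _).trans (csInf_le ?_ (Set.mem_image_of_mem _ hj))
  exact ((Set.finite_Icc _ _).image _).bddBelow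

theorem sum_Ico_Vsize_le_sum_Ico_Psize {n : ℕ} (hnτ : n < τ) (i : ℕ) :
    ∑ j ∈ Finset.Ico i (i + n + 1), Vsize τ (n + 1) k j ≤
      ∑ j ∈ Finset.Ico (i + n + 1) (i + τ), Psize τ (n + 1) k j := by
  rcases Nat.eq_zero_or_pos i with rfl | hi
  · rw [Finset.sum_eq_zero fun j hj => Vsize_of_lt (by simp at hj; omega),
      Finset.sum_eq_zero fun j hj => Psize_of_lt (by simp at hj; omega)]
  have hlast := Vsize_le_of_mem_Icc (τ := τ) (b := n + 1) (k := k) (m := i + n) (j := i)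
    (by omega) (by constructor <;> omega)
  have hIcc : Finset.Icc i (i + n - 1) = Finset.Ico i (i + n) := by ext; simp; omega
  have hsplit : ∑ l ∈ Finset.Ico (i + (n + 1)) (i + n + τ), Psize τ (n + 1) k l =
      (∑ l ∈ Finset.Ico (i + n + 1) (i + τ), Psize τ (n + 1) k l) +
        ∑ j ∈ Finset.Ico i (i + n), Usize τ (n + 1) k j := by
    rw [← Finset.sum_Ico_consecutive _ (by omega : i + (n + 1) ≤ i + τ) (by omega),
      ← Finset.sum_Ico_add']
    simp only [Psize_add_eq_Usize]
    rfl
  rw [hIcc, hsplit] at hlast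
  simp only [Usize, Finset.sum_sub_distrib] at hlast
  rw [Finset.sum_Ico_succ_top (by omega)]
  linarith

end

theorem stmt12_general (τ b : ℕ) (k : ℕ → ℤ) (hb : 1 ≤ b) (hbτ : b ≤ τ)
    (i : ℕ) :
    ∑ j ∈ Finset.Icc i (i + b - 1), Vsize τ b k j ≤
      ∑ j ∈ Finset.Icc (i + b) (i + τ - 1), Psize τ b k j := by
  obtain ⟨n, rfl⟩ := Nat.exists_eq_add_of_le' hb
  have hV : Finset.Icc i (i + (n + 1) - 1) = Finset.Ico i (i + n + 1) := by ext; simp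
  have hP : Finset.Icc (i + (n + 1)) (i + τ - 1) = Finset.Ico (i + n + 1) (i + τ) := by
    ext; simp; omega
  rw [hV, hP]
  exact sum_Ico_Vsize_le_sum_Ico_Psize (by omega) i

/-- for the burst `X[i],…,X[i+b−1]`, the parity strictly before time
`i+τ` covers the lost `V`-parts: `Σ_{j=i+b}^{i+τ−1} |P[j]| ≥ Σ_{j=i}^{i+b−1} |V[j]|`. -/
theorem stmt12 (τ b : ℕ) (k : ℕ → ℤ) (hb : 1 ≤ b) (hbτ : b ≤ τ) (hk : ∀ l, 0 ≤ k l)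
    (i : ℕ) :
    ∑ j ∈ Finset.Icc i (i + b - 1), Vsize τ b k j ≤
      ∑ j ∈ Finset.Icc (i + b) (i + τ - 1), Psize τ b k j :=
  stmt12_general τ b k hb hbτ i
end

section
/- Let S⁻, S⁺ be independent with H(S⁻) = c₁·H(𝒮), H(S⁺) = c₂·H(𝒮), and suppose random variables X⁻, X* satisfy: H(S⁻ | X*) = 0, H(S⁻, S⁺ | X⁻, X*) = 0, and H(X⁻ | S⁻) ≤ (d' − c₁)·H(𝒮). Then H(X*) ≥ (c₁ + c₂ − (d' − c₁))·H(𝒮) = (2c₁ + c₂ − d')·H(𝒮). -/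
open Finset

/-- Shannon entropy of a finite-valued random variable. -/
noncomputable def entH {Ω α : Type*} [Fintype Ω] [Fintype α] [DecidableEq α]
    (p : Ω → ℝ) (X : Ω → α) : ℝ :=
  -∑ a : α, (∑ ω ∈ Finset.univ.filter fun ω => X ω = a, p ω) *
      Real.log (∑ ω ∈ Finset.univ.filter fun ω => X ω = a, p ω)

/-- Conditional Shannon entropy `H(X | Y) = H(X, Y) − H(Y)`. -/
noncomputable def condH {Ω α β : Type*} [Fintype Ω] [Fintype α] [Fintype β]
    [DecidableEq α] [DecidableEq β] (p : Ω → ℝ) (X : Ω → α) (Y : Ω → β) : ℝ :=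
  entH p (fun ω => (X ω, Y ω)) - entH p Y

/-- Independence of the pair `(X, Y)`. -/
def Indep2 {Ω α β : Type*} [Fintype Ω] [DecidableEq α] [DecidableEq β]
    (p : Ω → ℝ) (X : Ω → α) (Y : Ω → β) : Prop :=
  ∀ (a : α) (b : β),
    (∑ ω ∈ Finset.univ.filter fun ω => X ω = a ∧ Y ω = b, p ω) =
      (∑ ω ∈ Finset.univ.filter fun ω => X ω = a, p ω) *
      (∑ ω ∈ Finset.univ.filter fun ω => Y ω = b, p ω)

/-!
Independence gives `H(S⁻, S⁺) = H(S⁻) + H(S⁺)`. Since `(S⁻, S⁺)` is determined by `(X⁻, X*)`,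
`H(S⁻, S⁺) ≤ H(X⁻, X*) ≤ H(X⁻, S⁻, X*)`, and submodularity of entropy bounds the latter by
`H(X⁻, S⁻) + H(S⁻, X*) − H(S⁻) = H(X⁻ | S⁻) + H(X*)`, because `S⁻` is determined by `X*`.
-/

noncomputable def law {Ω α : Type*} [Fintype Ω] [DecidableEq α]
    (p : Ω → ℝ) (X : Ω → α) (a : α) : ℝ :=
  ∑ ω ∈ univ.filter fun ω => X ω = a, p ω

namespace law

variable {Ω α β : Type*} [Fintype Ω] [DecidableEq α] [DecidableEq β] {p : Ω → ℝ}

lemma nonneg (hp : ∀ ω, 0 ≤ p ω) (X : Ω → α) (a : α) : 0 ≤ law p X a :=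
  Finset.sum_nonneg fun ω _ => hp ω

lemma sum_eq_one [Fintype α] (hp1 : ∑ ω, p ω = 1) (X : Ω → α) : ∑ a, law p X a = 1 := by
  rw [← hp1]
  exact Finset.sum_fiberwise _ _ _

lemma sum_pair_right [Fintype β] (X : Ω → α) (Y : Ω → β) (a : α) :
    ∑ b, law p (fun ω => (X ω, Y ω)) (a, b) = law p X a := by
  simp only [law, Prod.mk.injEq, ← Finset.filter_filter]
  exact Finset.sum_fiberwise _ _ _

lemma sum_pair_left [Fintype α] (X : Ω → α) (Y : Ω → β) (b : β) :
    ∑ a, law p (fun ω => (X ω, Y ω)) (a, b) = law p Y b := by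
  simp only [law, Prod.mk.injEq, and_comm (a := X _ = _), ← Finset.filter_filter]
  exact Finset.sum_fiberwise _ _ _

lemma pair_of_indep {X : Ω → α} {Y : Ω → β} (h : Indep2 p X Y) (a : α) (b : β) :
    law p (fun ω => (X ω, Y ω)) (a, b) = law p X a * law p Y b := by
  simp only [law, Prod.mk.injEq, ← h a b]

lemma comp [Fintype α] (X : Ω → α) (f : α → β) (b : β) :
    law p (fun ω => f (X ω)) b = ∑ a with f a = b, law p X a := by
  rw [law, ← Finset.sum_fiberwise_of_maps_to (g := X) (t := univ.filter fun a => f a = b)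
    (by simp)]
  refine Finset.sum_congr rfl fun a ha => ?_
  rw [law, Finset.filter_filter]
  congr 1
  ext ω
  simp only [Finset.mem_filter, Finset.mem_univ, true_and] at ha ⊢
  exact ⟨And.right, fun h => ⟨h ▸ ha, h⟩⟩

lemma le_comp (hp : ∀ ω, 0 ≤ p ω) (X : Ω → α) (f : α → β) (a : α) :
    law p X a ≤ law p (fun ω => f (X ω)) (f a) :=
  Finset.sum_le_sum_of_subset_of_nonneg (fun ω hω => by simp_all) fun ω _ _ => hp ω

lemma sum_comp_mul [Fintype α] [Fintype β] (X : Ω → α) (f : α → β) (g : β → ℝ) :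
    ∑ b, law p (fun ω => f (X ω)) b * g b = ∑ a, law p X a * g (f a) := by
  simp only [comp, Finset.sum_mul]
  rw [← Finset.sum_fiberwise univ f fun a => law p X a * g (f a)]
  refine Finset.sum_congr rfl fun b _ => Finset.sum_congr rfl fun a ha => ?_
  rw [(Finset.mem_filter.1 ha).2]

end law

lemma Real.negMulLog_sum_le {ι : Type*} {s : Finset ι} {g : ι → ℝ} (hg : ∀ i ∈ s, 0 ≤ g i) :
    Real.negMulLog (∑ i ∈ s, g i) ≤ ∑ i ∈ s, Real.negMulLog (g i) := by
  simp only [Real.negMulLog, neg_mul, Finset.sum_neg_distrib, Finset.sum_mul, neg_le_neg_iff]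
  refine Finset.sum_le_sum fun i hi => ?_
  rcases (hg i hi).eq_or_lt with h0 | hpos
  · simp [← h0]
  · exact mul_le_mul_of_nonneg_left (Real.log_le_log hpos (Finset.single_le_sum hg hi)) hpos.le

lemma Real.sub_le_mul_sub_log {r q : ℝ} (hr : 0 ≤ r) (hq : 0 < q) :
    r - q ≤ r * (Real.log r - Real.log q) := by
  rcases hr.eq_or_lt with rfl | hr
  · simpa using hq.le
  · have h := mul_le_mul_of_nonneg_left (Real.log_le_sub_one_of_pos (div_pos hq hr)) hr.le
    rw [Real.log_div hq.ne' hr.ne', mul_sub, mul_sub_one, mul_div_cancel₀ _ hr.ne'] at h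
    linarith

lemma Real.sub_mul_div_le_mul_log {r s t u : ℝ} (hr : 0 ≤ r) (hs : 0 ≤ s) (ht : 0 ≤ t) (hu : 0 ≤ u)
    (hrs : r ≤ s) (hrt : r ≤ t) (hru : r ≤ u) :
    r - s * t / u ≤ r * (Real.log r + Real.log u - Real.log s - Real.log t) := by
  rcases hr.eq_or_lt with rfl | hr
  · simpa using div_nonneg (mul_nonneg hs ht) hu
  · have hs := hr.trans_le hrs
    have ht := hr.trans_le hrt
    have hu := hr.trans_le hru
    have h := Real.sub_le_mul_sub_log hr.le (div_pos (mul_pos hs ht) hu)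
    rwa [Real.log_div (mul_pos hs ht).ne' hu.ne', Real.log_mul hs.ne' ht.ne',
      show ∀ a b c d : ℝ, a - (b + c - d) = a + d - b - c by intros; ring] at h

section entropy

variable {Ω α β γ : Type*} [Fintype Ω] [Fintype α] [Fintype β] [Fintype γ]
  [DecidableEq α] [DecidableEq β] [DecidableEq γ] {p : Ω → ℝ}

lemma entH_eq_sum_negMulLog (X : Ω → α) : entH p X = ∑ a, Real.negMulLog (law p X a) := by
  simp [entH, law, Real.negMulLog, Finset.sum_neg_distrib]

lemma entH_comp_le (hp : ∀ ω, 0 ≤ p ω) (X : Ω → α) (f : α → β) :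
    entH p (fun ω => f (X ω)) ≤ entH p X := by
  simp only [entH_eq_sum_negMulLog, law.comp]
  calc ∑ b, Real.negMulLog (∑ a with f a = b, law p X a)
      ≤ ∑ b, ∑ a with f a = b, Real.negMulLog (law p X a) :=
        Finset.sum_le_sum fun b _ => Real.negMulLog_sum_le fun a _ => law.nonneg hp X a
    _ = ∑ a, Real.negMulLog (law p X a) := Finset.sum_fiberwise _ _ _

lemma entH_comp_eq_sum (X : Ω → α) (f : α → β) :
    entH p (fun ω => f (X ω)) =
      ∑ a, law p X a * -Real.log (law p (fun ω => f (X ω)) (f a)) := by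
  rw [entH_eq_sum_negMulLog,
    ← law.sum_comp_mul X f fun b => -Real.log (law p (fun ω => f (X ω)) b)]
  simp only [Real.negMulLog, neg_mul, mul_neg]

lemma entH_pair_of_indep (hp1 : ∑ ω, p ω = 1) {X : Ω → α} {Y : Ω → β} (h : Indep2 p X Y) :
    entH p (fun ω => (X ω, Y ω)) = entH p X + entH p Y := by
  simp only [entH_eq_sum_negMulLog, Fintype.sum_prod_type, law.pair_of_indep h,
    Real.negMulLog_mul, Finset.sum_add_distrib, ← Finset.sum_mul, ← Finset.mul_sum,
    law.sum_eq_one hp1, one_mul]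

lemma sum_law_mul_law_div_law_le_one (hp1 : ∑ ω, p ω = 1) (X : Ω → α) (Y : Ω → β) (Z : Ω → γ) :
    ∑ v : α × β × γ, law p (fun ω => (X ω, Y ω)) (v.1, v.2.1) *
      law p (fun ω => (Y ω, Z ω)) v.2 / law p Y v.2.1 ≤ 1 := by
  have hfiber : ∀ y, ∑ x, ∑ z, law p (fun ω => (X ω, Y ω)) (x, y) *
      law p (fun ω => (Y ω, Z ω)) (y, z) / law p Y y ≤ law p Y y := by
    intro y
    rw [← Finset.sum_congr rfl fun x _ => Finset.sum_div .., ← Finset.sum_div,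
      ← Finset.sum_mul_sum, law.sum_pair_left, law.sum_pair_right]
    exact (mul_self_div_self _).le
  calc _ = ∑ y, ∑ x, ∑ z, law p (fun ω => (X ω, Y ω)) (x, y) *
          law p (fun ω => (Y ω, Z ω)) (y, z) / law p Y y := by
        simp only [Fintype.sum_prod_type]
        exact Finset.sum_comm
    _ ≤ ∑ y, law p Y y := Finset.sum_le_sum fun y _ => hfiber y
    _ = 1 := law.sum_eq_one hp1 Y

lemma entH_submodular (hp : ∀ ω, 0 ≤ p ω) (hp1 : ∑ ω, p ω = 1)
    (X : Ω → α) (Y : Ω → β) (Z : Ω → γ) :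
    entH p (fun ω => (X ω, Y ω, Z ω)) + entH p Y ≤
      entH p (fun ω => (X ω, Y ω)) + entH p (fun ω => (Y ω, Z ω)) := by
  -- Gibbs' inequality for the law of `W` against the sub-probability `P(x,y) P(y,z) / P(y)`.
  set W := fun ω => (X ω, Y ω, Z ω)
  have hW := entH_comp_eq_sum (p := p) W id
  have hXY := entH_comp_eq_sum (p := p) W fun v => (v.1, v.2.1)
  have hYZ := entH_comp_eq_sum (p := p) W Prod.snd
  have hY := entH_comp_eq_sum (p := p) W fun v => v.2.1
  dsimp only [W, id] at hW hXY hYZ hY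
  have hpoint := fun v : α × β × γ => Real.sub_mul_div_le_mul_log (law.nonneg hp W v)
    (law.nonneg hp _ (v.1, v.2.1)) (law.nonneg hp _ v.2) (law.nonneg hp _ v.2.1)
    (law.le_comp hp W (fun v => (v.1, v.2.1)) v) (law.le_comp hp W Prod.snd v)
    (law.le_comp hp W (fun v => v.2.1) v)
  have hsum := Finset.sum_le_sum fun v (_ : v ∈ univ) => hpoint v
  rw [Finset.sum_sub_distrib, law.sum_eq_one hp1] at hsum
  have hmass := sum_law_mul_law_div_law_le_one hp1 X Y Z
  simp only [mul_sub, mul_add, Finset.sum_sub_distrib, Finset.sum_add_distrib] at hsum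
  simp only [mul_neg, Finset.sum_neg_distrib] at hW hXY hYZ hY
  linarith

end entropy

theorem stmt16_general {Ω α β γ δ : Type*} [Fintype Ω] [Fintype α] [Fintype β] [Fintype γ] [Fintype δ]
    [DecidableEq α] [DecidableEq β] [DecidableEq γ] [DecidableEq δ]
    (p : Ω → ℝ) (hp : ∀ ω, 0 ≤ p ω) (hp1 : ∑ ω, p ω = 1)
    (Sm : Ω → α) (Sp : Ω → β) (Xm : Ω → γ) (Xs : Ω → δ)
    (hS c₁ c₂ d' : ℝ)
    (hindep : Indep2 p Sm Sp)
    (hHSm : entH p Sm = c₁ * hS)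
    (hHSp : entH p Sp = c₂ * hS)
    (hdec1 : condH p Sm Xs = 0)
    (hdec2 : condH p (fun ω => (Sm ω, Sp ω)) (fun ω => (Xm ω, Xs ω)) = 0)
    (hXm : condH p Xm Sm ≤ (d' - c₁) * hS) :
    entH p Xs ≥ (2 * c₁ + c₂ - d') * hS := by
  unfold condH at hdec1 hdec2 hXm
  have hS_le_joint := entH_comp_le hp (fun ω => ((Sm ω, Sp ω), (Xm ω, Xs ω))) Prod.fst
  have hX_le_triple := entH_comp_le hp (fun ω => (Xm ω, Sm ω, Xs ω)) fun v => (v.1, v.2.2)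
  have hsubmod := entH_submodular hp hp1 Xm Sm Xs
  rw [entH_pair_of_indep hp1 hindep] at hS_le_joint
  linarith

/-- with `S⁻, S⁺` independent, `H(S⁻) = c₁·H(𝒮)`, `H(S⁺) = c₂·H(𝒮)`,
`H(S⁻ | X*) = 0`, `H(S⁻, S⁺ | X⁻, X*) = 0` and `H(X⁻ | S⁻) ≤ (d' − c₁)·H(𝒮)`,
we get `H(X*) ≥ (2c₁ + c₂ − d')·H(𝒮)`. -/
theorem stmt16 {Ω α β γ δ : Type*} [Fintype Ω] [Fintype α] [Fintype β] [Fintype γ] [Fintype δ]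
    [DecidableEq α] [DecidableEq β] [DecidableEq γ] [DecidableEq δ]
    (p : Ω → ℝ) (hp : ∀ ω, 0 ≤ p ω) (hp1 : ∑ ω, p ω = 1)
    (Sm : Ω → α) (Sp : Ω → β) (Xm : Ω → γ) (Xs : Ω → δ)
    (hS c₁ c₂ d' : ℝ) (hc₁ : 0 ≤ c₁) (hc₂ : 0 ≤ c₂) (hd' : 0 ≤ d')
    (hindep : Indep2 p Sm Sp)
    (hHSm : entH p Sm = c₁ * hS)
    (hHSp : entH p Sp = c₂ * hS)
    (hdec1 : condH p Sm Xs = 0)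
    (hdec2 : condH p (fun ω => (Sm ω, Sp ω)) (fun ω => (Xm ω, Xs ω)) = 0)
    (hXm : condH p Xm Sm ≤ (d' - c₁) * hS) :
    entH p Xs ≥ (2 * c₁ + c₂ - d') * hS :=
  stmt16_general p hp hp1 Sm Sp Xm Xs hS c₁ c₂ d' hindep hHSm hHSp hdec1 hdec2 hXm
end
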